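/- arXiv:2209.05914 — 3 statements merged into one kernel-verified Lean document; each statement's English description precedes it below -/
import Mathlib

section
/- (Kotlarski-type identity for the characteristic function) Let X = X* + ε and W = X* + ν where X*, ε, ν are mutually independent, integrable, E[ε] = 0, and E[e^{isW}] ≠ 0 for all s in an interval [0, t]. Then the characteristic function φ of X* satisfies φ(t) = exp( ∫₀ᵗ i·E[X e^{isW}] / E[e^{isW}] ds ), provided φ is nonvanishing. -/
open MeasureTheory ProbabilityTheory Complex

lemma meas_cexp_aux {Ω : Type*} [MeasurableSpace Ω] {X : Ω → ℝ} (hX : Measurable X) (s : ℝ) :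
    Measurable (fun ω => Complex.exp (Complex.I * s * X ω)) :=
  Complex.measurable_exp.comp ((Complex.measurable_ofReal.comp hX).const_mul (Complex.I * s))

lemma integrable_cexp_aux {Ω : Type*} [MeasurableSpace Ω] (μ : Measure Ω) [IsProbabilityMeasure μ]
    {X : Ω → ℝ} (hX : Measurable X) (s : ℝ) :
    Integrable (fun ω => Complex.exp (Complex.I * s * X ω)) μ := by
  refine (integrable_const (1:ℝ)).mono' (meas_cexp_aux hX s).aestronglyMeasurable
    (ae_of_all _ fun ω => ?_)
  simp [Complex.norm_exp, Complex.mul_re]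

lemma integrable_mul_cexp_aux {Ω : Type*} [MeasurableSpace Ω] (μ : Measure Ω)
    [IsProbabilityMeasure μ] {Y X : Ω → ℝ} (hY : Measurable Y) (hYi : Integrable Y μ)
    (hX : Measurable X) (s : ℝ) :
    Integrable (fun ω => (Y ω : ℂ) * Complex.exp (Complex.I * s * X ω)) μ := by
  refine hYi.abs.mono' ((Complex.measurable_ofReal.comp hY).mul
    (meas_cexp_aux hX s)).aestronglyMeasurable (ae_of_all _ fun ω => ?_)
  simp [Complex.norm_exp, Complex.mul_re]

lemma hasDerivAt_cexp_aux (x : ℝ) (s : ℝ) :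
    HasDerivAt (fun u : ℝ => Complex.exp (Complex.I * u * x))
      (Complex.I * x * Complex.exp (Complex.I * s * x)) s := by
  have h1 : HasDerivAt (fun u : ℝ => Complex.I * (u : ℂ) * x) (Complex.I * x) s := by
    simpa using ((Complex.ofRealCLM.hasDerivAt (x := s)).const_mul Complex.I).mul_const (x : ℂ)
  simpa [mul_comm] using h1.cexp

lemma deriv_charFun_aux {Ω : Type*} [MeasurableSpace Ω] (μ : Measure Ω) [IsProbabilityMeasure μ]
    {X : Ω → ℝ} (hX : Measurable X) (hXi : Integrable X μ) (s : ℝ) :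
    HasDerivAt (fun u : ℝ => ∫ ω, Complex.exp (Complex.I * u * X ω) ∂μ)
      (Complex.I * ∫ ω, (X ω : ℂ) * Complex.exp (Complex.I * s * X ω) ∂μ) s := by
  have hm : ∀ u : ℝ, AEStronglyMeasurable (fun ω => Complex.exp (Complex.I * u * X ω)) μ :=
    fun u => (meas_cexp_aux hX u).aestronglyMeasurable
  have hm' : AEStronglyMeasurable
      (fun ω => Complex.I * X ω * Complex.exp (Complex.I * s * X ω)) μ :=
    (((Complex.measurable_ofReal.comp hX).const_mul Complex.I).mul
      (meas_cexp_aux hX s)).aestronglyMeasurable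
  have key := hasDerivAt_integral_of_dominated_loc_of_deriv_le (F := fun (u : ℝ) ω =>
      Complex.exp (Complex.I * u * X ω))
      (F' := fun (u : ℝ) ω => Complex.I * X ω * Complex.exp (Complex.I * u * X ω))
      (bound := fun ω => |X ω|) (x₀ := s) (s := Metric.ball s 1) (Metric.ball_mem_nhds s one_pos)
      (Filter.Eventually.of_forall hm) (integrable_cexp_aux μ hX s) hm'
      (ae_of_all _ fun ω u _ => ?_) hXi.abs (ae_of_all _ fun ω u _ => hasDerivAt_cexp_aux _ _)
  · have h2 := key.2
    have h3 : (∫ ω, Complex.I * X ω * Complex.exp (Complex.I * s * X ω) ∂μ)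
        = Complex.I * ∫ ω, (X ω : ℂ) * Complex.exp (Complex.I * s * X ω) ∂μ := by
      rw [← integral_const_mul]
      congr 1; funext ω; ring
    simpa [h3] using h2
  · simp [Complex.norm_exp, Complex.mul_re]

lemma indep_integral_mul_complex {Ω : Type*} [MeasurableSpace Ω] {μ : Measure Ω}
    {X Y : Ω → ℂ} (h : IndepFun X Y μ) (hX : Integrable X μ) (hY : Integrable Y μ) :
    ∫ ω, X ω * Y ω ∂μ = (∫ ω, X ω ∂μ) * ∫ ω, Y ω ∂μ := by
  have hrr : IndepFun (fun ω => (X ω).re) (fun ω => (Y ω).re) μ :=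
    h.comp Complex.measurable_re Complex.measurable_re
  have hri : IndepFun (fun ω => (X ω).re) (fun ω => (Y ω).im) μ :=
    h.comp Complex.measurable_re Complex.measurable_im
  have hir : IndepFun (fun ω => (X ω).im) (fun ω => (Y ω).re) μ :=
    h.comp Complex.measurable_im Complex.measurable_re
  have hii : IndepFun (fun ω => (X ω).im) (fun ω => (Y ω).im) μ :=
    h.comp Complex.measurable_im Complex.measurable_im
  have hXr : Integrable (fun ω => (X ω).re) μ := hX.re
  have hXi : Integrable (fun ω => (X ω).im) μ := hX.im
  have hYr : Integrable (fun ω => (Y ω).re) μ := hY.re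
  have hYi : Integrable (fun ω => (Y ω).im) μ := hY.im
  have irr := hrr.integral_mul_eq_mul_integral hXr.aestronglyMeasurable hYr.aestronglyMeasurable
  have iri := hri.integral_mul_eq_mul_integral hXr.aestronglyMeasurable hYi.aestronglyMeasurable
  have iir := hir.integral_mul_eq_mul_integral hXi.aestronglyMeasurable hYr.aestronglyMeasurable
  have iii := hii.integral_mul_eq_mul_integral hXi.aestronglyMeasurable hYi.aestronglyMeasurable
  have prr : Integrable (fun ω => (X ω).re * (Y ω).re) μ := hrr.integrable_mul hXr hYr
  have pri : Integrable (fun ω => (X ω).re * (Y ω).im) μ := hri.integrable_mul hXr hYi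
  have pir : Integrable (fun ω => (X ω).im * (Y ω).re) μ := hir.integrable_mul hXi hYr
  have pii : Integrable (fun ω => (X ω).im * (Y ω).im) μ := hii.integrable_mul hXi hYi
  have hmul : Integrable (fun ω => X ω * Y ω) μ := h.integrable_mul hX hY
  have er := integral_re hmul; have ei := integral_im hmul
  have erX := integral_re hX; have eiX := integral_im hX
  have erY := integral_re hY; have eiY := integral_im hY
  simp only [RCLike.re_to_complex, RCLike.im_to_complex] at er ei erX eiX erY eiY
  apply Complex.ext
  · rw [← er, Complex.mul_re, ← erX, ← erY, ← eiX, ← eiY, ← irr, ← iii]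
    simp_rw [Complex.mul_re]
    exact integral_sub prr pii
  · rw [← ei, Complex.mul_im, ← erX, ← erY, ← eiX, ← eiY, ← iri, ← iir]
    simp_rw [Complex.mul_im]
    exact integral_add pri pir

lemma factor_B_aux {Ω : Type*} [MeasurableSpace Ω] {μ : Measure Ω} [IsProbabilityMeasure μ]
    {X v : Ω → ℝ} (hX : Measurable X) (hv : Measurable v)
    (hind : IndepFun X v μ) (s : ℝ) :
    (∫ ω, Complex.exp (Complex.I * s * (X ω + v ω)) ∂μ) =
      (∫ ω, Complex.exp (Complex.I * s * X ω) ∂μ) *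
      (∫ ω, Complex.exp (Complex.I * s * v ω) ∂μ) := by
  have hsplit : ∀ ω, Complex.exp (Complex.I * s * ((X ω : ℂ) + v ω)) =
      Complex.exp (Complex.I * s * X ω) * Complex.exp (Complex.I * s * v ω) := by
    intro ω
    have harg : Complex.I * s * ((X ω : ℂ) + v ω) =
        Complex.I * s * X ω + Complex.I * s * v ω := by ring
    rw [harg, Complex.exp_add]
  have hm : Measurable (fun x : ℝ => Complex.exp (Complex.I * s * x)) :=
    Complex.measurable_exp.comp (Complex.measurable_ofReal.const_mul (Complex.I * s))
  have h1 : IndepFun (fun ω => Complex.exp (Complex.I * s * X ω))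
      (fun ω => Complex.exp (Complex.I * s * v ω)) μ := hind.comp hm hm
  simp_rw [hsplit]
  exact indep_integral_mul_complex h1 (integrable_cexp_aux μ hX s) (integrable_cexp_aux μ hv s)

theorem kotlarski_identity
    {Ω : Type*} [MeasurableSpace Ω] (μ : Measure Ω) [IsProbabilityMeasure μ]
    (Xs e v : Ω → ℝ)
    (hXs : Measurable Xs) (he : Measurable e) (hv : Measurable v)
    (hindep : iIndepFun ![Xs, e, v] μ)
    (hXint : Integrable Xs μ) (heint : Integrable e μ) (hvint : Integrable v μ)
    (hemean : ∫ ω, e ω ∂μ = 0)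
    (t : ℝ)
    (hφ : ∀ s : ℝ, (∫ ω, Complex.exp (Complex.I * s * Xs ω) ∂μ) ≠ 0)
    (hW : ∀ s ∈ Set.uIcc (0 : ℝ) t,
      (∫ ω, Complex.exp (Complex.I * s * (Xs ω + v ω)) ∂μ) ≠ 0) :
    (∫ ω, Complex.exp (Complex.I * t * Xs ω) ∂μ) =
      Complex.exp (∫ s in (0 : ℝ)..t,
        Complex.I * (∫ ω, (Xs ω + e ω) * Complex.exp (Complex.I * s * (Xs ω + v ω)) ∂μ) /
          (∫ ω, Complex.exp (Complex.I * s * (Xs ω + v ω)) ∂μ)) := by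
  -- notations
  set f : ℝ → ℂ := fun s => ∫ ω, Complex.exp (Complex.I * s * Xs ω) ∂μ with hfdef
  set g : ℝ → ℂ := fun s => ∫ ω, (Xs ω : ℂ) * Complex.exp (Complex.I * s * Xs ω) ∂μ with hgdef
  set h : ℝ → ℂ := fun s => ∫ ω, Complex.exp (Complex.I * s * v ω) ∂μ with hhdef
  have hφ' : ∀ s : ℝ, f s ≠ 0 := fun s => hφ s
  -- independence facts
  have hmeas : ∀ i, Measurable (![Xs, e, v] i) := by
    intro i; fin_cases i <;> simpa using ‹_›
  have iXv : IndepFun Xs v μ := by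
    simpa using hindep.indepFun (show (0 : Fin 3) ≠ 2 by decide)
  have ieX : IndepFun e Xs μ := by
    simpa using hindep.indepFun (show (1 : Fin 3) ≠ 0 by decide)
  have iXev : IndepFun (fun ω => (Xs ω, e ω)) v μ := by
    simpa using hindep.indepFun_prodMk hmeas 0 1 2 (by decide) (by decide)
  -- factorization of denominators
  have hB : ∀ s : ℝ, (∫ ω, Complex.exp (Complex.I * s * (Xs ω + v ω)) ∂μ) = f s * h s :=
    fun s => factor_B_aux hXs hv iXv s
  -- factorization of numerators
  have hA : ∀ s : ℝ,
      (∫ ω, ((Xs ω : ℂ) + e ω) * Complex.exp (Complex.I * s * ((Xs ω : ℂ) + v ω)) ∂μ)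
        = g s * h s := by
    intro s
    have hsplit : ∀ ω, ((Xs ω : ℂ) + e ω) * Complex.exp (Complex.I * s * ((Xs ω : ℂ) + v ω)) =
        (((Xs ω : ℂ) + e ω) * Complex.exp (Complex.I * s * Xs ω)) *
          Complex.exp (Complex.I * s * v ω) := by
      intro ω
      have harg : Complex.I * s * ((Xs ω : ℂ) + v ω) =
          Complex.I * s * Xs ω + Complex.I * s * v ω := by ring
      rw [harg, Complex.exp_add]; ring
    simp_rw [hsplit]
    have hφm : Measurable (fun p : ℝ × ℝ =>
        ((p.1 : ℂ) + p.2) * Complex.exp (Complex.I * s * p.1)) :=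
      ((Complex.measurable_ofReal.comp measurable_fst).add
        (Complex.measurable_ofReal.comp measurable_snd)).mul
        (Complex.measurable_exp.comp
          ((Complex.measurable_ofReal.comp measurable_fst).const_mul (Complex.I * s)))
    have hψm : Measurable (fun x : ℝ => Complex.exp (Complex.I * s * x)) :=
      Complex.measurable_exp.comp (Complex.measurable_ofReal.const_mul (Complex.I * s))
    have hPQ : IndepFun
        (fun ω => ((Xs ω : ℂ) + e ω) * Complex.exp (Complex.I * s * Xs ω))
        (fun ω => Complex.exp (Complex.I * s * v ω)) μ := iXev.comp hφm hψm
    have hPint : Integrable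
        (fun ω => ((Xs ω : ℂ) + e ω) * Complex.exp (Complex.I * s * Xs ω)) μ := by
      have := integrable_mul_cexp_aux μ (hXs.add he) (hXint.add heint) hXs s
      simpa using this
    have step := indep_integral_mul_complex hPQ hPint (integrable_cexp_aux μ hv s)
    rw [step]
    congr 1
    -- ∫ (Xs + e) * cexp = g s
    have hadd : ∀ ω, ((Xs ω : ℂ) + e ω) * Complex.exp (Complex.I * s * Xs ω) =
        (Xs ω : ℂ) * Complex.exp (Complex.I * s * Xs ω) +
        (e ω : ℂ) * Complex.exp (Complex.I * s * Xs ω) := fun ω => by ring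
    simp_rw [hadd]
    rw [integral_add (integrable_mul_cexp_aux μ hXs hXint hXs s)
      (integrable_mul_cexp_aux μ he heint hXs s)]
    have hindeX : IndepFun (fun ω => (e ω : ℂ))
        (fun ω => Complex.exp (Complex.I * s * Xs ω)) μ :=
      ieX.comp Complex.measurable_ofReal hψm
    have heC : Integrable (fun ω => (e ω : ℂ)) μ := heint.ofReal
    have hz := indep_integral_mul_complex hindeX heC (integrable_cexp_aux μ hXs s)
    have : (∫ ω, (e ω : ℂ) ∂μ) = 0 := by
      have h1 : (∫ ω, (e ω : ℂ) ∂μ) = ((∫ ω, e ω ∂μ : ℝ) : ℂ) := integral_ofReal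
      rw [h1, hemean]; simp
    rw [hz, this, zero_mul, add_zero]
  -- derivative of f
  have hf' : ∀ s : ℝ, HasDerivAt f (Complex.I * g s) s :=
    fun s => deriv_charFun_aux μ hXs hXint s
  have hfc : Continuous f := by
    rw [continuous_iff_continuousAt]; exact fun s => (hf' s).continuousAt
  -- continuity of g
  have hgc : Continuous g := by
    refine continuous_of_dominated (F := fun (s : ℝ) ω =>
        (Xs ω : ℂ) * Complex.exp (Complex.I * s * Xs ω)) (bound := fun ω => |Xs ω|)
      (fun s => ((Complex.measurable_ofReal.comp hXs).mul
        (meas_cexp_aux hXs s)).aestronglyMeasurable)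
      (fun s => ae_of_all _ fun ω => ?_) hXint.abs (ae_of_all _ fun ω => ?_)
    · simp [Complex.norm_exp, Complex.mul_re]
    · exact continuous_const.mul (by fun_prop)
  set c : ℝ → ℂ := fun s => Complex.I * g s / f s with hcdef
  have hcc : Continuous c := (continuous_const.mul hgc).div hfc hφ'
  set F : ℝ → ℂ := fun u => ∫ s in (0:ℝ)..u, c s with hFdef
  have hF' : ∀ u : ℝ, HasDerivAt F (c u) u := fun u =>
    intervalIntegral.integral_hasDerivAt_right (hcc.intervalIntegrable 0 u)
      (hcc.stronglyMeasurableAtFilter _ _) hcc.continuousAt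
  -- the function G = f * exp(-F) is constant
  set G : ℝ → ℂ := fun u => f u * Complex.exp (-F u) with hGdef
  have hG' : ∀ u : ℝ, HasDerivAt G 0 u := by
    intro u
    have h1 := (hF' u).neg.cexp
    have h2 := (hf' u).mul h1
    have key : f u * c u = Complex.I * g u := by
      rw [hcdef]
      field_simp
      exact mul_div_cancel_left₀ _ (hφ' u)
    have h3 : (0:ℂ) = Complex.I * g u * Complex.exp (-F u) + f u * (Complex.exp (-F u) * -c u) := by
      rw [← key]; ring
    exact h2.congr_deriv h3.symm
  have hconst : G t = G 0 :=
    is_const_of_deriv_eq_zero (fun u => (hG' u).differentiableAt)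
      (fun u => (hG' u).deriv) t 0
  have hf0 : f 0 = 1 := by
    rw [hfdef]; simp
  have hF0 : F 0 = 0 := intervalIntegral.integral_same
  have hG0 : G 0 = 1 := by rw [hGdef]; simp [hf0, hF0]
  have hft : f t = Complex.exp (F t) := by
    have hGt : f t * Complex.exp (-F t) = 1 := by rw [← hG0]; exact hconst
    calc f t = f t * Complex.exp (-F t) * Complex.exp (F t) := by
          rw [mul_assoc, ← Complex.exp_add]; simp
      _ = Complex.exp (F t) := by rw [hGt, one_mul]
  -- identify the integrand
  have hint_eq : (∫ s in (0:ℝ)..t,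
      Complex.I * (∫ ω, ((Xs ω : ℂ) + e ω) *
        Complex.exp (Complex.I * s * ((Xs ω : ℂ) + v ω)) ∂μ) /
        (∫ ω, Complex.exp (Complex.I * s * ((Xs ω : ℂ) + v ω)) ∂μ)) = F t := by
    rw [hFdef]
    refine intervalIntegral.integral_congr fun s hs => ?_
    have hh : h s ≠ 0 := by
      intro h0
      exact hW s hs (by rw [hB s, h0, mul_zero])
    show Complex.I * (∫ ω, ((Xs ω : ℂ) + e ω) *
        Complex.exp (Complex.I * s * ((Xs ω : ℂ) + v ω)) ∂μ) /
        (∫ ω, Complex.exp (Complex.I * s * ((Xs ω : ℂ) + v ω)) ∂μ)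
        = Complex.I * g s / f s
    rw [hA s, hB s]
    field_simp [hφ' s, hh]
  rw [hint_eq]
  exact hft
end

section
/- Let ε be a random variable independent of the pair (Y, X*) in the sense that E[Y | X*, ε] = E[Y | X*], let X = X* + ε, and let K be a kernel with integrable Fourier transform K^ft supported in [-1,1]. Define the deconvolution kernel 𝕂(u) = (1/2π) ∫ e^{-itu} K^ft(t)/f_ε^ft(t/b) dt with bandwidth b > 0, where f_ε^ft is the (nonvanishing) characteristic function of ε. Then for every x ∈ ℝ, E[Y · 𝕂((x - X)/b)] = E[Y · K((x - X*)/b)]. -/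
open MeasureTheory ProbabilityTheory

lemma indepFun_integral_mul_complex {Ω : Type*} [MeasurableSpace Ω] {μ : Measure Ω}
    {f g : Ω → ℂ} (h : IndepFun f g μ) (hf : Integrable f μ) (hg : Integrable g μ) :
    ∫ ω, f ω * g ω ∂μ = (∫ ω, f ω ∂μ) * ∫ ω, g ω ∂μ := by
  have hA : Integrable (fun ω => (f ω).re) μ := hf.re
  have hB : Integrable (fun ω => (f ω).im) μ := hf.im
  have hC : Integrable (fun ω => (g ω).re) μ := hg.re
  have hD : Integrable (fun ω => (g ω).im) μ := hg.im
  have iAC : IndepFun (fun ω => (f ω).re) (fun ω => (g ω).re) μ :=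
    h.comp Complex.measurable_re Complex.measurable_re
  have iAD : IndepFun (fun ω => (f ω).re) (fun ω => (g ω).im) μ :=
    h.comp Complex.measurable_re Complex.measurable_im
  have iBC : IndepFun (fun ω => (f ω).im) (fun ω => (g ω).re) μ :=
    h.comp Complex.measurable_im Complex.measurable_re
  have iBD : IndepFun (fun ω => (f ω).im) (fun ω => (g ω).im) μ :=
    h.comp Complex.measurable_im Complex.measurable_im
  have hfg : Integrable (fun ω => f ω * g ω) μ := h.integrable_mul hf hg
  have eAC : ∫ ω, (f ω).re * (g ω).re ∂μ = (∫ ω, (f ω).re ∂μ) * ∫ ω, (g ω).re ∂μ :=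
    iAC.integral_fun_mul_eq_mul_integral hA.1 hC.1
  have eAD : ∫ ω, (f ω).re * (g ω).im ∂μ = (∫ ω, (f ω).re ∂μ) * ∫ ω, (g ω).im ∂μ :=
    iAD.integral_fun_mul_eq_mul_integral hA.1 hD.1
  have eBC : ∫ ω, (f ω).im * (g ω).re ∂μ = (∫ ω, (f ω).im ∂μ) * ∫ ω, (g ω).re ∂μ :=
    iBC.integral_fun_mul_eq_mul_integral hB.1 hC.1
  have eBD : ∫ ω, (f ω).im * (g ω).im ∂μ = (∫ ω, (f ω).im ∂μ) * ∫ ω, (g ω).im ∂μ :=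
    iBD.integral_fun_mul_eq_mul_integral hB.1 hD.1
  have rf : ∫ ω, (f ω).re ∂μ = (∫ ω, f ω ∂μ).re := integral_re hf
  have rg : ∫ ω, (g ω).re ∂μ = (∫ ω, g ω ∂μ).re := integral_re hg
  have jf : ∫ ω, (f ω).im ∂μ = (∫ ω, f ω ∂μ).im := integral_im hf
  have jg : ∫ ω, (g ω).im ∂μ = (∫ ω, g ω ∂μ).im := integral_im hg
  have mAC : Integrable (fun ω => (f ω).re * (g ω).re) μ := iAC.integrable_mul hA hC
  have mAD : Integrable (fun ω => (f ω).re * (g ω).im) μ := iAD.integrable_mul hA hD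
  have mBC : Integrable (fun ω => (f ω).im * (g ω).re) μ := iBC.integrable_mul hB hC
  have mBD : Integrable (fun ω => (f ω).im * (g ω).im) μ := iBD.integrable_mul hB hD
  apply Complex.ext
  · have h1 := integral_re hfg
    simp only [RCLike.re_to_complex, Complex.mul_re] at h1 ⊢
    rw [← h1, integral_sub mAC mBD, eAC, eBD, rf, rg, jf, jg]
  · have h1 := integral_im hfg
    simp only [RCLike.im_to_complex, Complex.mul_im] at h1 ⊢
    rw [← h1, integral_add mAD mBC, eAD, eBC, rf, rg, jf, jg]

theorem deconvolution_kernel_unbiasedness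
    {Ω : Type*} [MeasurableSpace Ω] (μ : Measure Ω) [IsProbabilityMeasure μ]
    (Y Xs ε : Ω → ℝ)
    (hY : Measurable Y) (hXs : Measurable Xs) (hε : Measurable ε)
    (hYsq : Integrable (fun ω => (Y ω) ^ 2) μ)
    (hindep : IndepFun (fun ω => (Y ω, Xs ω)) ε μ)
    (K : ℝ → ℝ) (Kft : ℝ → ℂ) (b : ℝ) (hb : 0 < b) (x : ℝ)
    (hKft_supp : ∀ t : ℝ, t ∉ Set.Icc (-1 : ℝ) 1 → Kft t = 0)
    (hKft_bdd : ∃ C, ∀ t, ‖Kft t‖ ≤ C)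
    (hKft_int : Integrable Kft)
    (fε : ℝ → ℂ)
    (hfε : fε = fun t : ℝ => ∫ ω, Complex.exp (Complex.I * t * ε ω) ∂μ)
    (hfε_ne : ∀ t, fε t ≠ 0)
    (hK : ∀ u : ℝ, (K u : ℂ) =
      (1 / (2 * Real.pi) : ℂ) * ∫ t : ℝ, Complex.exp (-(Complex.I * t * u)) * Kft t)
    (𝕂 : ℝ → ℂ)
    (h𝕂 : 𝕂 = fun u : ℝ =>
      (1 / (2 * Real.pi) : ℂ) * ∫ t : ℝ, Complex.exp (-(Complex.I * t * u)) * Kft t / fε (t / b))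
    (hint1 : Integrable (fun ω => (Y ω : ℂ) * 𝕂 ((x - (Xs ω + ε ω)) / b)) μ)
    (hint2 : Integrable (fun ω => (Y ω : ℂ) * (K ((x - Xs ω) / b) : ℂ)) μ) :
    (∫ ω, (Y ω : ℂ) * 𝕂 ((x - (Xs ω + ε ω)) / b) ∂μ) =
      ∫ ω, (Y ω : ℂ) * (K ((x - Xs ω) / b) : ℂ) ∂μ := by
  have hb' : b ≠ 0 := ne_of_gt hb
  set C : ℂ := (1 / (2 * Real.pi) : ℂ) with hCdef
  -- exponentials of purely imaginary arguments have norm 1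
  have hre : ∀ (s u : ℝ), (Complex.I * (s : ℂ) * (u : ℂ)).re = 0 := by
    intro s u
    simp [Complex.mul_re, Complex.mul_im]
  have hnorm1 : ∀ (s u : ℝ), ‖Complex.exp (Complex.I * (s : ℂ) * (u : ℂ))‖ = 1 := by
    intro s u
    rw [Complex.norm_exp, hre, Real.exp_zero]
  have hnorm2 : ∀ (s u : ℝ), ‖Complex.exp (-(Complex.I * (s : ℂ) * (u : ℂ)))‖ = 1 := by
    intro s u
    rw [Complex.norm_exp, Complex.neg_re, hre, neg_zero, Real.exp_zero]
  -- Y is integrable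
  have hYint : Integrable Y μ := by
    refine ((hYsq.add (integrable_const 1)).div_const 2).mono'
      hY.aestronglyMeasurable (Filter.Eventually.of_forall fun ω => ?_)
    simp only [Real.norm_eq_abs, Pi.add_apply]
    nlinarith [sq_nonneg (|Y ω| - 1), sq_abs (Y ω), abs_nonneg (Y ω)]
  -- fε is continuous
  have hfε_cont : Continuous fε := by
    rw [hfε]
    refine continuous_of_dominated (fun t => ?_) (fun t => Filter.Eventually.of_forall fun ω => ?_)
      (integrable_const 1) (Filter.Eventually.of_forall fun ω => ?_)
    · exact ((measurable_const.mul (Complex.measurable_ofReal.comp hε)).cexp).aestronglyMeasurable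
    · rw [hnorm1]
    · exact Complex.continuous_exp.comp
        ((continuous_const.mul Complex.continuous_ofReal).mul continuous_const)
  -- lower bound for ‖fε‖ on the relevant compact set
  obtain ⟨t₀, ht₀, hmin'⟩ := isCompact_Icc.exists_isMinOn
    (Set.nonempty_Icc.2 (by have := one_div_pos.2 hb; linarith))
    ((continuous_norm.comp hfε_cont).continuousOn (s := Set.Icc (-(1/b)) (1/b)))
  have hmin : ∀ s ∈ Set.Icc (-(1/b)) (1/b), ‖fε t₀‖ ≤ ‖fε s‖ := fun s hs => hmin' hs
  set c : ℝ := ‖fε t₀‖ with hcdef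
  have hc : 0 < c := norm_pos_iff.2 (hfε_ne t₀)
  -- the deconvolution integrand g
  set g : ℝ → ℂ := fun t => Kft t / fε (t / b) with hgdef
  have hg_aesm : AEStronglyMeasurable g volume := by
    exact (hKft_int.1.aemeasurable.div
      ((hfε_cont.measurable.comp (measurable_id.div_const b)).aemeasurable)).aestronglyMeasurable
  have hg_bound : ∀ t, ‖g t‖ ≤ ‖Kft t‖ / c := by
    intro t
    by_cases ht : t ∈ Set.Icc (-1 : ℝ) 1
    · rw [hgdef]
      simp only [norm_div]
      apply div_le_div_of_nonneg_left (norm_nonneg _) hc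
      apply hmin
      constructor
      · rw [show -(1/b) = (-1)/b by ring]
        exact (div_le_div_iff_of_pos_right hb).2 ht.1
      · rw [show (1:ℝ)/b = 1/b from rfl]
        exact (div_le_div_iff_of_pos_right hb).2 ht.2
    · simp [hgdef, hKft_supp t ht, div_nonneg (norm_nonneg (Kft t)) hc.le]
  have hg_int : Integrable g := by
    exact (hKft_int.norm.div_const c).mono' hg_aesm (Filter.Eventually.of_forall hg_bound)
  -- pointwise rewriting of the LHS integrand
  have claim1 : ∀ ω, (Y ω : ℂ) * 𝕂 ((x - (Xs ω + ε ω)) / b) =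
      C * ∫ t : ℝ, (Y ω : ℂ) *
        (Complex.exp (-(Complex.I * (t : ℂ) * (((x - Xs ω) / b : ℝ) : ℂ))) *
          (Complex.exp (Complex.I * ((t / b : ℝ) : ℂ) * ((ε ω : ℝ) : ℂ)) * g t)) := by
    intro ω
    rw [h𝕂]
    simp only
    rw [integral_const_mul]
    have hAB : ∀ t : ℝ,
        Complex.exp (-(Complex.I * (t:ℂ) * (((x - (Xs ω + ε ω)) / b : ℝ) : ℂ))) * Kft t
            / fε (t / b)
          = Complex.exp (-(Complex.I * (t:ℂ) * (((x - Xs ω) / b : ℝ) : ℂ))) *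
            (Complex.exp (Complex.I * ((t / b : ℝ) : ℂ) * ((ε ω : ℝ) : ℂ)) * g t) := by
      intro t
      have hexp : (-(Complex.I * (t:ℂ) * (((x - (Xs ω + ε ω)) / b : ℝ) : ℂ)))
          = -(Complex.I * (t:ℂ) * (((x - Xs ω) / b : ℝ) : ℂ))
            + Complex.I * ((t / b : ℝ) : ℂ) * ((ε ω : ℝ) : ℂ) := by
        push_cast
        have hbc : (b : ℂ) ≠ 0 := by exact_mod_cast hb'
        field_simp
        ring
      rw [hexp, Complex.exp_add]
      simp only [hgdef]
      ring
    rw [show (∫ t : ℝ, Complex.exp (-(Complex.I * (t:ℂ) *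
          (((x - (Xs ω + ε ω)) / b : ℝ) : ℂ))) * Kft t / fε (t / b))
        = ∫ t : ℝ, Complex.exp (-(Complex.I * (t:ℂ) * (((x - Xs ω) / b : ℝ) : ℂ))) *
            (Complex.exp (Complex.I * ((t / b : ℝ) : ℂ) * ((ε ω : ℝ) : ℂ)) * g t)
      from integral_congr_ae (Filter.Eventually.of_forall hAB)]
    ring
  -- integrability of the two factors, for fixed t
  have hI1 : ∀ t : ℝ, Integrable (fun ω => (Y ω : ℂ) *
      Complex.exp (-(Complex.I * (t:ℂ) * (((x - Xs ω) / b : ℝ) : ℂ)))) μ := by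
    intro t
    have m : Measurable fun ω => (Y ω : ℂ) *
        Complex.exp (-(Complex.I * (t:ℂ) * (((x - Xs ω) / b : ℝ) : ℂ))) :=
      (Complex.measurable_ofReal.comp hY).mul
        (((measurable_const.mul (Complex.measurable_ofReal.comp
          ((measurable_const.sub hXs).div_const b))).neg).cexp)
    refine hYint.norm.mono' m.aestronglyMeasurable (Filter.Eventually.of_forall fun ω => ?_)
    rw [norm_mul, hnorm2, mul_one, Complex.norm_real]
  have hI2 : ∀ t : ℝ, Integrable (fun ω =>
      Complex.exp (Complex.I * ((t / b : ℝ) : ℂ) * ((ε ω : ℝ) : ℂ))) μ := by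
    intro t
    refine (integrable_const (1:ℝ)).mono'
      (((measurable_const.mul (Complex.measurable_ofReal.comp hε)).cexp).aestronglyMeasurable)
      (Filter.Eventually.of_forall fun ω => ?_)
    rw [hnorm1]
  -- inner ω-integral for fixed t
  have claim2 : ∀ t : ℝ,
      (∫ ω, (Y ω : ℂ) *
        (Complex.exp (-(Complex.I * (t:ℂ) * (((x - Xs ω) / b : ℝ) : ℂ))) *
          (Complex.exp (Complex.I * ((t / b : ℝ) : ℂ) * ((ε ω : ℝ) : ℂ)) * g t)) ∂μ)
        = Kft t * ∫ ω, (Y ω : ℂ) *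
            Complex.exp (-(Complex.I * (t:ℂ) * (((x - Xs ω) / b : ℝ) : ℂ))) ∂μ := by
    intro t
    have h1 : (fun ω => (Y ω : ℂ) *
        (Complex.exp (-(Complex.I * (t:ℂ) * (((x - Xs ω) / b : ℝ) : ℂ))) *
          (Complex.exp (Complex.I * ((t / b : ℝ) : ℂ) * ((ε ω : ℝ) : ℂ)) * g t)))
        = fun ω => (((Y ω : ℂ) *
            Complex.exp (-(Complex.I * (t:ℂ) * (((x - Xs ω) / b : ℝ) : ℂ)))) *
          Complex.exp (Complex.I * ((t / b : ℝ) : ℂ) * ((ε ω : ℝ) : ℂ))) * g t := by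
      funext ω; ring
    rw [h1, integral_mul_const]
    have hφ : Measurable fun p : ℝ × ℝ => (p.1 : ℂ) *
        Complex.exp (-(Complex.I * (t:ℂ) * (((x - p.2) / b : ℝ) : ℂ))) :=
      (Complex.measurable_ofReal.comp measurable_fst).mul
        (((measurable_const.mul (Complex.measurable_ofReal.comp
          ((measurable_const.sub measurable_snd).div_const b))).neg).cexp)
    have hψ : Measurable fun e : ℝ => Complex.exp (Complex.I * ((t / b : ℝ) : ℂ) * (e : ℂ)) :=
      (measurable_const.mul Complex.measurable_ofReal).cexp
    have iYe : IndepFun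
        (fun ω => (Y ω : ℂ) *
          Complex.exp (-(Complex.I * (t:ℂ) * (((x - Xs ω) / b : ℝ) : ℂ))))
        (fun ω => Complex.exp (Complex.I * ((t / b : ℝ) : ℂ) * ((ε ω : ℝ) : ℂ))) μ :=
      hindep.comp hφ hψ
    rw [indepFun_integral_mul_complex iYe (hI1 t) (hI2 t)]
    have he2 : (∫ ω, Complex.exp (Complex.I * ((t / b : ℝ) : ℂ) * ((ε ω : ℝ) : ℂ)) ∂μ)
        = fε (t / b) := by rw [hfε]
    rw [he2]
    simp only [hgdef]
    have hcancel : ∀ A F k : ℂ, F ≠ 0 → A * F * (k / F) = k * A := by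
      intro A F k hF
      field_simp
    exact hcancel _ _ _ (hfε_ne (t / b))
  -- first Fubini
  have hFint : Integrable (fun p : Ω × ℝ => (Y p.1 : ℂ) *
      (Complex.exp (-(Complex.I * (p.2:ℂ) * (((x - Xs p.1) / b : ℝ) : ℂ))) *
        (Complex.exp (Complex.I * ((p.2 / b : ℝ) : ℂ) * ((ε p.1 : ℝ) : ℂ)) * g p.2)))
      (μ.prod volume) := by
    have m1 : Measurable fun p : Ω × ℝ => (Y p.1 : ℂ) :=
      Complex.measurable_ofReal.comp (hY.comp measurable_fst)
    have m2 : Measurable fun p : Ω × ℝ =>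
        Complex.exp (-(Complex.I * (p.2:ℂ) * (((x - Xs p.1) / b : ℝ) : ℂ))) :=
      (((measurable_const.mul (Complex.measurable_ofReal.comp measurable_snd)).mul
        (Complex.measurable_ofReal.comp
          ((measurable_const.sub (hXs.comp measurable_fst)).div_const b))).neg).cexp
    have m3 : Measurable fun p : Ω × ℝ =>
        Complex.exp (Complex.I * ((p.2 / b : ℝ) : ℂ) * ((ε p.1 : ℝ) : ℂ)) :=
      ((measurable_const.mul (Complex.measurable_ofReal.comp (measurable_snd.div_const b))).mul
        (Complex.measurable_ofReal.comp (hε.comp measurable_fst))).cexp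
    refine (hYint.norm.mul_prod hg_int.norm).mono'
      (m1.aestronglyMeasurable.mul
        (m2.aestronglyMeasurable.mul (m3.aestronglyMeasurable.mul hg_aesm.comp_snd)))
      (Filter.Eventually.of_forall fun p => ?_)
    rw [norm_mul, norm_mul, norm_mul, hnorm2, hnorm1, one_mul, one_mul, Complex.norm_real]
  have swap1 : (∫ ω, (∫ t : ℝ, (Y ω : ℂ) *
        (Complex.exp (-(Complex.I * (t:ℂ) * (((x - Xs ω) / b : ℝ) : ℂ))) *
          (Complex.exp (Complex.I * ((t / b : ℝ) : ℂ) * ((ε ω : ℝ) : ℂ)) * g t))) ∂μ)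
      = ∫ t : ℝ, (∫ ω, (Y ω : ℂ) *
        (Complex.exp (-(Complex.I * (t:ℂ) * (((x - Xs ω) / b : ℝ) : ℂ))) *
          (Complex.exp (Complex.I * ((t / b : ℝ) : ℂ) * ((ε ω : ℝ) : ℂ)) * g t)) ∂μ) :=
    integral_integral_swap hFint
  -- pointwise rewriting of the RHS integrand
  have claim3 : ∀ ω, (Y ω : ℂ) * (K ((x - Xs ω) / b) : ℂ) =
      C * ∫ t : ℝ, (Y ω : ℂ) *
        (Complex.exp (-(Complex.I * (t:ℂ) * (((x - Xs ω) / b : ℝ) : ℂ))) * Kft t) := by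
    intro ω
    rw [hK ((x - Xs ω) / b), integral_const_mul]
    ring
  have claim4 : ∀ t : ℝ,
      (∫ ω, (Y ω : ℂ) *
        (Complex.exp (-(Complex.I * (t:ℂ) * (((x - Xs ω) / b : ℝ) : ℂ))) * Kft t) ∂μ)
      = (∫ ω, (Y ω : ℂ) *
          Complex.exp (-(Complex.I * (t:ℂ) * (((x - Xs ω) / b : ℝ) : ℂ))) ∂μ) * Kft t := by
    intro t
    rw [show (fun ω => (Y ω : ℂ) *
        (Complex.exp (-(Complex.I * (t:ℂ) * (((x - Xs ω) / b : ℝ) : ℂ))) * Kft t))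
      = fun ω => ((Y ω : ℂ) *
          Complex.exp (-(Complex.I * (t:ℂ) * (((x - Xs ω) / b : ℝ) : ℂ)))) * Kft t
      from funext fun ω => by ring]
    exact integral_mul_const _ _
  -- second Fubini
  have hGint : Integrable (fun p : Ω × ℝ => (Y p.1 : ℂ) *
      (Complex.exp (-(Complex.I * (p.2:ℂ) * (((x - Xs p.1) / b : ℝ) : ℂ))) * Kft p.2))
      (μ.prod volume) := by
    have m1 : Measurable fun p : Ω × ℝ => (Y p.1 : ℂ) :=
      Complex.measurable_ofReal.comp (hY.comp measurable_fst)
    have m2 : Measurable fun p : Ω × ℝ =>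
        Complex.exp (-(Complex.I * (p.2:ℂ) * (((x - Xs p.1) / b : ℝ) : ℂ))) :=
      (((measurable_const.mul (Complex.measurable_ofReal.comp measurable_snd)).mul
        (Complex.measurable_ofReal.comp
          ((measurable_const.sub (hXs.comp measurable_fst)).div_const b))).neg).cexp
    refine (hYint.norm.mul_prod hKft_int.norm).mono'
      (m1.aestronglyMeasurable.mul (m2.aestronglyMeasurable.mul hKft_int.1.comp_snd))
      (Filter.Eventually.of_forall fun p => ?_)
    rw [norm_mul, norm_mul, hnorm2, one_mul, Complex.norm_real]
  have swap2 : (∫ ω, (∫ t : ℝ, (Y ω : ℂ) *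
        (Complex.exp (-(Complex.I * (t:ℂ) * (((x - Xs ω) / b : ℝ) : ℂ))) * Kft t)) ∂μ)
      = ∫ t : ℝ, (∫ ω, (Y ω : ℂ) *
        (Complex.exp (-(Complex.I * (t:ℂ) * (((x - Xs ω) / b : ℝ) : ℂ))) * Kft t) ∂μ) :=
    integral_integral_swap hGint
  -- assemble
  calc (∫ ω, (Y ω : ℂ) * 𝕂 ((x - (Xs ω + ε ω)) / b) ∂μ)
      = ∫ ω, C * (∫ t : ℝ, (Y ω : ℂ) *
          (Complex.exp (-(Complex.I * (t:ℂ) * (((x - Xs ω) / b : ℝ) : ℂ))) *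
            (Complex.exp (Complex.I * ((t / b : ℝ) : ℂ) * ((ε ω : ℝ) : ℂ)) * g t))) ∂μ :=
        integral_congr_ae (Filter.Eventually.of_forall claim1)
    _ = C * ∫ ω, (∫ t : ℝ, (Y ω : ℂ) *
          (Complex.exp (-(Complex.I * (t:ℂ) * (((x - Xs ω) / b : ℝ) : ℂ))) *
            (Complex.exp (Complex.I * ((t / b : ℝ) : ℂ) * ((ε ω : ℝ) : ℂ)) * g t))) ∂μ :=
        integral_const_mul _ _
    _ = C * ∫ t : ℝ, (∫ ω, (Y ω : ℂ) *
          (Complex.exp (-(Complex.I * (t:ℂ) * (((x - Xs ω) / b : ℝ) : ℂ))) *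
            (Complex.exp (Complex.I * ((t / b : ℝ) : ℂ) * ((ε ω : ℝ) : ℂ)) * g t)) ∂μ) := by
        rw [swap1]
    _ = C * ∫ t : ℝ, Kft t * (∫ ω, (Y ω : ℂ) *
          Complex.exp (-(Complex.I * (t:ℂ) * (((x - Xs ω) / b : ℝ) : ℂ))) ∂μ) := by
        rw [integral_congr_ae (Filter.Eventually.of_forall claim2)]
    _ = C * ∫ t : ℝ, (∫ ω, (Y ω : ℂ) *
          Complex.exp (-(Complex.I * (t:ℂ) * (((x - Xs ω) / b : ℝ) : ℂ))) ∂μ) * Kft t := by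
        congr 1
        exact integral_congr_ae (Filter.Eventually.of_forall fun t => mul_comm _ _)
    _ = C * ∫ t : ℝ, (∫ ω, (Y ω : ℂ) *
          (Complex.exp (-(Complex.I * (t:ℂ) * (((x - Xs ω) / b : ℝ) : ℂ))) * Kft t) ∂μ) := by
        rw [integral_congr_ae (Filter.Eventually.of_forall claim4)]
    _ = C * ∫ ω, (∫ t : ℝ, (Y ω : ℂ) *
          (Complex.exp (-(Complex.I * (t:ℂ) * (((x - Xs ω) / b : ℝ) : ℂ))) * Kft t)) ∂μ := by
        rw [swap2]
    _ = ∫ ω, C * (∫ t : ℝ, (Y ω : ℂ) *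
          (Complex.exp (-(Complex.I * (t:ℂ) * (((x - Xs ω) / b : ℝ) : ℂ))) * Kft t)) ∂μ :=
        (integral_const_mul _ _).symm
    _ = ∫ ω, (Y ω : ℂ) * (K ((x - Xs ω) / b) : ℂ) ∂μ :=
        (integral_congr_ae (Filter.Eventually.of_forall claim3)).symm
end

section
/- Under the same kernel assumptions (K symmetric of order α, differentiable, with K, K' integrable), for h α-times continuously differentiable with Lipschitz α-th derivative (modulus m bounded), integration by parts gives b⁻² ∫ h(z) K'((x - z)/b) dz = b⁻¹ ∫ K((z - x)/b) h'(z) dz, and hence b⁻² ∫ h(z) K'((x-z)/b) dz = h'(x) + O(b^α) uniformly in x. -/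
open MeasureTheory Filter Topology

lemma integrable_comp_affine {K : ℝ → ℝ} (hK : Integrable K) (c : ℝ) {a : ℝ} (ha : a ≠ 0) :
    Integrable (fun z : ℝ => K (c + a * z)) := by
  have h1 : Integrable (fun w : ℝ => K (c + w)) := by
    have := (measurePreserving_add_left (volume : Measure ℝ) c).integrable_comp_emb
      (MeasurableEquiv.addLeft c).measurableEmbedding (g := K)
    exact this.mpr hK
  exact (integrable_comp_mul_left_iff (fun w : ℝ => K (c + w)) ha).2 h1

lemma bounded_of_integrable_deriv {K : ℝ → ℝ} (hKd : Differentiable ℝ K)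
    (hKint : Integrable K) (hK'int : Integrable (deriv K)) :
    ∃ C, ∀ u, |K u| ≤ C := by
  have htop : Tendsto K atTop (𝓝 0) :=
    tendsto_zero_of_hasDerivAt_of_integrableOn_Ioi (a := 0)
      (fun x _ => (hKd x).hasDerivAt) hK'int.integrableOn hKint.integrableOn
  have hbot : Tendsto K atBot (𝓝 0) :=
    tendsto_zero_of_hasDerivAt_of_integrableOn_Iic (a := 0)
      (fun x _ => (hKd x).hasDerivAt) hK'int.integrableOn hKint.integrableOn
  have h1 : ∀ᶠ x in atTop, |K x| ≤ 1 := by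
    filter_upwards [htop.eventually (Metric.ball_mem_nhds (0:ℝ) one_pos)] with x hx
    simpa [Real.dist_eq] using hx.le
  have h2 : ∀ᶠ x in atBot, |K x| ≤ 1 := by
    filter_upwards [hbot.eventually (Metric.ball_mem_nhds (0:ℝ) one_pos)] with x hx
    simpa [Real.dist_eq] using hx.le
  obtain ⟨A, hA⟩ := h1.exists_forall_of_atTop
  obtain ⟨B, hB⟩ := h2.exists_forall_of_atBot
  obtain ⟨C, hC⟩ := (isCompact_Icc (a := B) (b := A)).exists_bound_of_continuousOn
    (hKd.continuous.continuousOn (s := Set.Icc B A))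
  refine ⟨max 1 C, fun u => ?_⟩
  rcases le_total u B with h | h
  · rcases le_total u A with h' | h'
    · exact le_max_of_le_left (hB u h)
    · exact le_max_of_le_left (hA u h')
  · rcases le_total u A with h' | h'
    · exact le_max_of_le_right (by simpa using hC u ⟨h, h'⟩)
    · exact le_max_of_le_left (hA u h')

lemma taylor_bd : ∀ (n : ℕ) (g : ℝ → ℝ), ContDiff ℝ n g → ∀ (x M : ℝ), 0 ≤ M →
    (∀ s, |iteratedDeriv n g (x + s) - iteratedDeriv n g x| ≤ M * |s|) →
    ∀ t, |g (x + t) - ∑ j ∈ Finset.range (n + 1),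
      iteratedDeriv j g x * t ^ j / (j.factorial : ℝ)| ≤ M * |t| ^ (n + 1) := by
  intro n
  induction n with
  | zero =>
    intro g hg x M hM hL t
    simpa using hL t
  | succ n IH =>
    intro g hg x M hM hL t
    have hg' : Differentiable ℝ g := hg.differentiable (by simp)
    have hg2 : ContDiff ℝ ((n : ℕ∞) + 1) g := by exact_mod_cast hg
    have hgd : ContDiff ℝ n (deriv g) := (contDiff_succ_iff_deriv.mp hg2).2.2
    have hL' : ∀ s, |iteratedDeriv n (deriv g) (x + s) - iteratedDeriv n (deriv g) x| ≤ M * |s| := by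
      intro s
      rw [← iteratedDeriv_succ']
      exact hL s
    have IH' := IH (deriv g) hgd x M hM hL'
    set φ : ℝ → ℝ := fun t => g (x + t) - ∑ j ∈ Finset.range (n + 2),
      iteratedDeriv j g x * t ^ j / (j.factorial : ℝ) with hφ
    set φ' : ℝ → ℝ := fun s => deriv g (x + s) - ∑ j ∈ Finset.range (n + 1),
      iteratedDeriv (j + 1) g x * s ^ j / (j.factorial : ℝ) with hφ'
    have hder : ∀ s, HasDerivAt φ (φ' s) s := by
      intro s
      have h1 : HasDerivAt (fun t => g (x + t)) (deriv g (x + s)) s := by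
        have := ((hg'.differentiableAt (x := x + s)).hasDerivAt).comp s
          ((hasDerivAt_id s).const_add x)
        rw [mul_one] at this
        exact this
      have h2 : HasDerivAt (fun t : ℝ => ∑ j ∈ Finset.range (n + 2),
          iteratedDeriv j g x * t ^ j / (j.factorial : ℝ))
          (∑ j ∈ Finset.range (n + 1), iteratedDeriv (j + 1) g x * s ^ j / (j.factorial : ℝ)) s := by
        have h3 : HasDerivAt (fun t : ℝ => ∑ j ∈ Finset.range (n + 2),
            iteratedDeriv j g x * t ^ j / (j.factorial : ℝ))
            (∑ j ∈ Finset.range (n + 2),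
              iteratedDeriv j g x * ((j : ℝ) * s ^ (j - 1)) / (j.factorial : ℝ)) s := by
          apply HasDerivAt.fun_sum
          intro j _
          simpa [mul_div_assoc] using
            ((hasDerivAt_pow j s).const_mul (iteratedDeriv j g x)).div_const (j.factorial : ℝ)
        have hsum : ∑ j ∈ Finset.range (n + 2),
            iteratedDeriv j g x * ((j : ℝ) * s ^ (j - 1)) / (j.factorial : ℝ)
            = ∑ j ∈ Finset.range (n + 1),
              iteratedDeriv (j + 1) g x * s ^ j / (j.factorial : ℝ) := by
          rw [Finset.sum_range_succ']
          simp only [Nat.cast_zero, zero_mul, mul_zero, zero_div, add_zero, Nat.add_sub_cancel]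
          apply Finset.sum_congr rfl
          intro i _
          have hf : (Nat.factorial (i+1) : ℝ) = (i+1) * (Nat.factorial i : ℝ) := by
            rw [Nat.factorial_succ]; push_cast; ring
          have hfne : (Nat.factorial i : ℝ) ≠ 0 := Nat.cast_ne_zero.mpr i.factorial_ne_zero
          have hine : ((i : ℝ) + 1) ≠ 0 := by positivity
          rw [hf]
          push_cast
          field_simp
        rw [← hsum]
        exact h3
      exact h1.sub h2
    have key : ∀ s, s ∈ Set.uIcc 0 t → |φ' s| ≤ M * |t| ^ (n + 1) := by
      intro s hs
      have hst : |s| ≤ |t| := by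
        rcases Set.mem_uIcc.mp hs with ⟨h1, h2⟩ | ⟨h1, h2⟩
        · rw [abs_of_nonneg h1]; exact h2.trans (le_abs_self t)
        · rw [abs_of_nonpos h2]
          exact (neg_le_neg h1).trans (neg_le_abs t)
      calc |φ' s| ≤ M * |s| ^ (n + 1) := by
            have := IH' s
            simp only [hφ']
            convert this using 3
            exact Finset.sum_congr rfl fun j _ => by rw [iteratedDeriv_succ']
          _ ≤ M * |t| ^ (n + 1) := by
            apply mul_le_mul_of_nonneg_left _ hM
            exact pow_le_pow_left₀ (abs_nonneg s) hst _
    have mv := Convex.norm_image_sub_le_of_norm_hasDerivWithin_le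
      (f := φ) (f' := φ') (C := M * |t| ^ (n + 1)) (s := Set.uIcc 0 t)
      (fun s hs => (hder s).hasDerivWithinAt)
      (fun s hs => by simpa [Real.norm_eq_abs] using key s hs)
      (convex_uIcc 0 t) (Set.left_mem_uIcc) (Set.right_mem_uIcc)
    have hφ0 : φ 0 = 0 := by
      simp only [hφ]
      rw [Finset.sum_range_succ']
      simp [iteratedDeriv_zero]
    rw [hφ0, sub_zero, Real.norm_eq_abs, Real.norm_eq_abs, sub_zero] at mv
    calc |g (x + t) - ∑ j ∈ Finset.range (n + 1 + 1),
        iteratedDeriv j g x * t ^ j / (j.factorial : ℝ)| = |φ t| := rfl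
      _ ≤ M * |t| ^ (n + 1) * |t| := mv
      _ = M * |t| ^ (n + 2) := by ring

lemma kernel_ibp (K h : ℝ → ℝ)
    (hKsymm : ∀ u, K (-u) = K u) (hKdiff : Differentiable ℝ K)
    (hKint : Integrable K) (hK'int : Integrable (deriv K))
    (hhdiff : Differentiable ℝ h)
    (hhint : Integrable h) (hh'int : Integrable (deriv h))
    (hhbdd : ∃ C, ∀ x, |h x| ≤ C)
    (b : ℝ) (hb : 0 < b) (x : ℝ) :
    (b ^ 2)⁻¹ * ∫ z : ℝ, h z * deriv K ((x - z) / b) =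
      b⁻¹ * ∫ z : ℝ, K ((z - x) / b) * deriv h z := by
  have hKbdd : ∃ C, ∀ u, |K u| ≤ C := bounded_of_integrable_deriv hKdiff hKint hK'int
  have hbne : b ≠ 0 := hb.ne'
  set v : ℝ → ℝ := fun z => K ((x - z) / b) with hv_def
  set v' : ℝ → ℝ := fun z => deriv K ((x - z) / b) * (-b⁻¹) with hv'_def
  have hv : ∀ z, HasDerivAt v (v' z) z := by
    intro z
    have ha : HasDerivAt (fun z : ℝ => (x - z) / b) (-b⁻¹) z := by
      have := ((hasDerivAt_id z).const_sub x).div_const b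
      simpa [neg_div, one_div] using this
    have := (hKdiff ((x - z) / b)).hasDerivAt.comp z ha
    exact this
  have hu : ∀ z, HasDerivAt h (deriv h z) z := fun z => (hhdiff z).hasDerivAt
  have haff : ∀ z : ℝ, (x - z) / b = x / b + (-b⁻¹) * z := by
    intro z; field_simp; ring
  have hKcomp_int : Integrable (fun z : ℝ => deriv K ((x - z) / b)) := by
    have := integrable_comp_affine hK'int (x / b) (a := -b⁻¹) (by simp [hbne])
    exact this.congr (by filter_upwards with z; rw [← haff z])
  have hmeas_h : AEStronglyMeasurable h volume := hhdiff.continuous.aestronglyMeasurable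
  have huv' : Integrable (fun z => h z * v' z) := by
    have : Integrable (fun z : ℝ => deriv K ((x - z) / b) * (-b⁻¹)) := hKcomp_int.mul_const _
    obtain ⟨C, hC⟩ := hhbdd
    exact this.bdd_mul hmeas_h (Filter.Eventually.of_forall fun z => by simpa using hC z)
  obtain ⟨CK, hCK⟩ := hKbdd
  have hvmeas : AEStronglyMeasurable v volume :=
    (hKdiff.continuous.comp (by continuity)).aestronglyMeasurable
  have hu'v : Integrable (fun z => deriv h z * v z) := by
    have : Integrable (fun z => v z * deriv h z) :=
      hh'int.bdd_mul hvmeas (Filter.Eventually.of_forall fun z => by simpa using hCK _)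
    exact this.congr (by filter_upwards with z; rw [mul_comm])
  have huv : Integrable (fun z => h z * v z) := by
    have : Integrable (fun z => v z * h z) :=
      hhint.bdd_mul hvmeas (Filter.Eventually.of_forall fun z => by simpa using hCK _)
    exact this.congr (by filter_upwards with z; rw [mul_comm])
  have key := integral_mul_deriv_eq_deriv_mul_of_integrable (fun z _ => hu z) (fun z _ => hv z) huv' hu'v huv
  have hsymm : ∀ z : ℝ, v z = K ((z - x) / b) := by
    intro z
    show K ((x - z) / b) = K ((z - x) / b)
    have : (x - z) / b = -((z - x) / b) := by ring
    rw [this, hKsymm]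
  have lhs_eq : ∫ z, h z * v' z = (∫ z : ℝ, h z * deriv K ((x - z) / b)) * (-b⁻¹) := by
    rw [← integral_mul_const]
    congr 1; ext z; simp [hv'_def]; ring
  have rhs_eq : ∫ z, deriv h z * v z = ∫ z : ℝ, K ((z - x) / b) * deriv h z := by
    congr 1; ext z; rw [hsymm z, mul_comm]
  rw [lhs_eq, rhs_eq] at key
  have : (∫ z : ℝ, h z * deriv K ((x - z) / b)) = b * ∫ z : ℝ, K ((z - x) / b) * deriv h z := by
    field_simp at key
    linarith [key]
  rw [this]
  field_simp

lemma kernel_chg (K g : ℝ → ℝ) (b : ℝ) (hb : 0 < b) (x : ℝ) :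
    b⁻¹ * ∫ z : ℝ, K ((z - x) / b) * g z = ∫ u : ℝ, K u * g (x + b * u) := by
  have hbne : b ≠ 0 := hb.ne'
  set F : ℝ → ℝ := fun w => K (w / b) * g (x + w) with hF
  have h1 : ∫ u : ℝ, K u * g (x + b * u) = ∫ u : ℝ, F (b * u) := by
    congr 1; ext u
    simp only [hF, mul_div_cancel_left₀ _ hbne]
  have h2 : (∫ u : ℝ, F (b * u)) = |b⁻¹| • ∫ w : ℝ, F w := Measure.integral_comp_mul_left F b
  have h3 : ∫ w : ℝ, F w = ∫ z : ℝ, K ((z - x) / b) * g z := by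
    have := integral_add_right_eq_self (μ := volume) (fun z : ℝ => K ((z - x) / b) * g z) x
    rw [← this]
    congr 1; ext w
    simp only [hF, add_sub_cancel_right]
    ring_nf
  rw [h1, h2, h3, abs_of_pos (inv_pos.mpr hb), smul_eq_mul]

lemma kernel_bias (α n : ℕ) (hn : n + 1 = α) (K g : ℝ → ℝ) (M : ℝ)
    (hgC : ContDiff ℝ n g) (hgbdd : ∃ C, ∀ y, |g y| ≤ C) (hgcont : Continuous g)
    (hKint : Integrable K) (hKcont : Continuous K)
    (hK1 : ∫ u : ℝ, K u = 1)
    (hKl : ∀ l : ℕ, 1 ≤ l → l < α → ∫ u : ℝ, u ^ l * K u = 0)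
    (hKmom : Integrable (fun u : ℝ => |u| ^ α * |K u|))
    (hM : 0 ≤ M)
    (hLip : ∀ x s : ℝ, |iteratedDeriv n g (x + s) - iteratedDeriv n g x| ≤ M * |s|)
    (b : ℝ) (hb : 0 < b) (x : ℝ) :
    |(∫ u : ℝ, K u * g (x + b * u)) - g x| ≤ (M * ∫ u : ℝ, |u| ^ α * |K u|) * b ^ α := by
  have hbne : b ≠ 0 := hb.ne'
  have hintj : ∀ j : ℕ, j ≤ α → Integrable (fun u : ℝ => u ^ j * K u) := by
    intro j hj
    have hbound : Integrable (fun u : ℝ => |K u| + |u| ^ α * |K u|) := hKint.abs.add hKmom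
    refine hbound.mono' (((continuous_pow j).mul hKcont).aestronglyMeasurable) ?_
    filter_upwards with u
    rw [Real.norm_eq_abs, abs_mul, abs_pow]
    rcases le_total (|u|) 1 with h | h
    · have h1 : |u| ^ j ≤ 1 := pow_le_one₀ (abs_nonneg u) h
      have : |u| ^ j * |K u| ≤ 1 * |K u| :=
        mul_le_mul_of_nonneg_right h1 (abs_nonneg _)
      nlinarith [abs_nonneg (K u), pow_nonneg (abs_nonneg u) α]
    · have h1 : |u| ^ j ≤ |u| ^ α := pow_le_pow_right₀ h hj
      have : |u| ^ j * |K u| ≤ |u| ^ α * |K u| :=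
        mul_le_mul_of_nonneg_right h1 (abs_nonneg _)
      nlinarith [abs_nonneg (K u)]
  have hint1 : Integrable (fun u : ℝ => K u * g (x + b * u)) := by
    obtain ⟨C, hC⟩ := hgbdd
    have : Integrable (fun u : ℝ => g (x + b * u) * K u) :=
      hKint.bdd_mul (hgcont.comp (by continuity)).aestronglyMeasurable
        (Filter.Eventually.of_forall fun u => by simpa using hC _)
    exact this.congr (by filter_upwards with u; rw [mul_comm])
  set d : ℕ → ℝ := fun j => iteratedDeriv j g x * b ^ j / (j.factorial : ℝ) with hd
  set Q : ℝ → ℝ := fun u => ∑ j ∈ Finset.range α, d j * (u ^ j * K u) with hQ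
  have hQint : Integrable Q := by
    apply integrable_finset_sum
    intro j hj
    exact (hintj j (le_of_lt (Finset.mem_range.mp hj))).const_mul (d j)
  have hQval : ∫ u : ℝ, Q u = g x := by
    rw [hQ]
    rw [integral_finset_sum _ (fun j hj =>
      (hintj j (le_of_lt (Finset.mem_range.mp hj))).const_mul (d j))]
    have : ∀ j ∈ Finset.range α, (∫ u : ℝ, d j * (u ^ j * K u)) = d j * ∫ u : ℝ, u ^ j * K u := by
      intro j _; exact integral_const_mul _ _
    rw [Finset.sum_congr rfl this]
    rw [Finset.sum_eq_single 0]
    · simp only [hd, pow_zero, Nat.factorial_zero, Nat.cast_one, mul_one, iteratedDeriv_zero,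
        one_mul, div_one]
      rw [hK1]; ring
    · intro j hj hj0
      rw [hKl j (Nat.one_le_iff_ne_zero.mpr hj0) (Finset.mem_range.mp hj), mul_zero]
    · intro h0
      exfalso; exact h0 (Finset.mem_range.mpr (by omega))
  have hsplit : (∫ u : ℝ, K u * g (x + b * u)) - g x
      = ∫ u : ℝ, (K u * g (x + b * u) - Q u) := by
    rw [integral_sub hint1 hQint, hQval]
  rw [hsplit]
  have hptwise : ∀ u : ℝ, |K u * g (x + b * u) - Q u|
      ≤ M * b ^ α * (|u| ^ α * |K u|) := by
    intro u
    have hQu : Q u = K u * ∑ j ∈ Finset.range α,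
        iteratedDeriv j g x * (b * u) ^ j / (j.factorial : ℝ) := by
      rw [hQ, Finset.mul_sum]
      apply Finset.sum_congr rfl
      intro j _
      simp only [hd, mul_pow]
      ring
    rw [hQu, ← mul_sub, abs_mul]
    have htay := taylor_bd n g hgC x M hM (hLip x) (b * u)
    rw [hn] at htay
    calc |K u| * |g (x + b * u) - ∑ j ∈ Finset.range α,
          iteratedDeriv j g x * (b * u) ^ j / (j.factorial : ℝ)|
        ≤ |K u| * (M * |b * u| ^ α) := mul_le_mul_of_nonneg_left htay (abs_nonneg _)
      _ = M * b ^ α * (|u| ^ α * |K u|) := by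
          rw [abs_mul, mul_pow, abs_of_pos hb]; ring
  calc |∫ u : ℝ, (K u * g (x + b * u) - Q u)|
      ≤ ∫ u : ℝ, M * b ^ α * (|u| ^ α * |K u|) := by
        rw [← Real.norm_eq_abs]
        refine norm_integral_le_of_norm_le (hKmom.const_mul _) ?_
        filter_upwards with u
        rw [Real.norm_eq_abs]
        exact hptwise u
    _ = (M * ∫ u : ℝ, |u| ^ α * |K u|) * b ^ α := by
        rw [integral_const_mul]; ring

theorem kernel_integration_by_parts_and_bias
    (α : ℕ) (hα : 1 ≤ α) (K h m : ℝ → ℝ) (M : ℝ)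
    (hKsymm : ∀ u, K (-u) = K u) (hKdiff : Differentiable ℝ K)
    (hKint : Integrable K) (hK'int : Integrable (deriv K))
    (hK1 : ∫ u : ℝ, K u = 1)
    (hKl : ∀ l : ℕ, 1 ≤ l → l < α → ∫ u : ℝ, u ^ l * K u = 0)
    (hKmom : Integrable (fun u : ℝ => |u| ^ α * |K u|))
    (hh : ContDiff ℝ α h)
    (hh_bdd : ∀ j : ℕ, j ≤ α → ∃ C, ∀ x, |iteratedDeriv j h x| ≤ C)
    (hh_int : ∀ j : ℕ, j ≤ α → Integrable (iteratedDeriv j h))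
    (hm_bdd : ∀ x, |m x| ≤ M)
    (hlip : ∀ x Δ : ℝ, |iteratedDeriv α h (x + Δ) - iteratedDeriv α h x| ≤ m x * |Δ|)
    (hvanish : ∀ b : ℝ, 0 < b → ∀ x : ℝ,
      Tendsto (fun z => h z * K ((x - z) / b)) (cocompact ℝ) (𝓝 0)) :
    (∀ b : ℝ, 0 < b → ∀ x : ℝ,
      (b ^ 2)⁻¹ * ∫ z : ℝ, h z * deriv K ((x - z) / b) =
        b⁻¹ * ∫ z : ℝ, K ((z - x) / b) * deriv h z) ∧
    (∃ C : ℝ, ∀ b : ℝ, 0 < b → ∀ x : ℝ,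
      |(b ^ 2)⁻¹ * (∫ z : ℝ, h z * deriv K ((x - z) / b)) - deriv h x| ≤ C * b ^ α) := by
  set n : ℕ := α - 1 with hn_def
  have hn : n + 1 = α := Nat.succ_pred_eq_of_pos hα
  have hhdiff : Differentiable ℝ h := hh.differentiable (by exact_mod_cast (show α ≠ 0 by omega))
  have hhint : Integrable h := by
    have := hh_int 0 (by omega); rwa [iteratedDeriv_zero] at this
  have hh'int : Integrable (deriv h) := by
    have := hh_int 1 hα; rwa [iteratedDeriv_one] at this
  have hhbdd : ∃ C, ∀ x, |h x| ≤ C := by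
    obtain ⟨C, hC⟩ := hh_bdd 0 (by omega)
    exact ⟨C, fun x => by have := hC x; rwa [iteratedDeriv_zero] at this⟩
  have hgbdd : ∃ C, ∀ y, |deriv h y| ≤ C := by
    obtain ⟨C, hC⟩ := hh_bdd 1 hα
    exact ⟨C, fun y => by have := hC y; rwa [iteratedDeriv_one] at this⟩
  have hh' : ContDiff ℝ ((n + 1 : ℕ)) h := by rw [hn]; exact hh
  have hh2 : ContDiff ℝ ((n : ℕ∞) + 1) h := by exact_mod_cast hh'
  have hgC : ContDiff ℝ n (deriv h) := (contDiff_succ_iff_deriv.mp hh2).2.2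
  have hgcont : Continuous (deriv h) := hgC.continuous
  have hM : 0 ≤ M := le_trans (abs_nonneg _) (hm_bdd 0)
  have hiter : iteratedDeriv n (deriv h) = iteratedDeriv α h := by
    rw [← hn, iteratedDeriv_succ']
  have hLip : ∀ x s : ℝ, |iteratedDeriv n (deriv h) (x + s) - iteratedDeriv n (deriv h) x|
      ≤ M * |s| := by
    intro x s
    rw [hiter]
    exact (hlip x s).trans
      (mul_le_mul_of_nonneg_right ((le_abs_self (m x)).trans (hm_bdd x)) (abs_nonneg s))
  have part1 : ∀ b : ℝ, 0 < b → ∀ x : ℝ,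
      (b ^ 2)⁻¹ * ∫ z : ℝ, h z * deriv K ((x - z) / b) =
        b⁻¹ * ∫ z : ℝ, K ((z - x) / b) * deriv h z :=
    fun b hb x => kernel_ibp K h hKsymm hKdiff hKint hK'int hhdiff hhint hh'int hhbdd b hb x
  refine ⟨part1, ⟨M * ∫ u : ℝ, |u| ^ α * |K u|, fun b hb x => ?_⟩⟩
  rw [part1 b hb x, kernel_chg K (deriv h) b hb x]
  exact kernel_bias α n hn K (deriv h) M hgC hgbdd hgcont hKint hKdiff.continuous hK1 hKl hKmom
    hM hLip b hb x
end
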